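/- arXiv:2510.13292 — 3 statements merged into one kernel-verified Lean document; each statement's English description precedes it below -/
import Mathlib

section
/- There are at most q^n/n monic irreducible polynomials of degree n in F_q[t]. -/
/-!
Every monic irreducible `p` of degree `n` over `F` divides `X ^ q ^ n - X`, since its degree
divides `n`. Distinct monic irreducibles are coprime, so the product of any finite family of them
divides `X ^ q ^ n - X` as well, and comparing degrees bounds the size of the family by
`q ^ n / n`; a uniform bound on finite subfamilies also gives finiteness.
-/

open Polynomial Finset

namespace Polynomial

variable {K : Type*} [Field K]

theorem Monic.isCoprime_of_irreducible {p r : K[X]} (hp : p.Monic) (hr : r.Monic)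
    (hpi : Irreducible p) (hri : Irreducible r) (hne : p ≠ r) : IsCoprime p r :=
  (hpi.coprime_iff_not_dvd).mpr fun hdvd =>
    hne (eq_of_monic_of_associated hp hr (hpi.associated_of_dvd hri hdvd))

theorem sum_natDegree_le_of_forall_monic_irreducible_dvd {g : K[X]} (hg : g ≠ 0)
    {T : Finset K[X]} (hT : ∀ p ∈ T, p.Monic ∧ Irreducible p ∧ p ∣ g) :
    ∑ p ∈ T, p.natDegree ≤ g.natDegree := by
  have hprod : ∏ p ∈ T, p ∣ g :=
    Finset.prod_dvd_of_coprime
      (fun p hp r hr hne => (hT p hp).1.isCoprime_of_irreducible (hT r hr).1 (hT p hp).2.1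
        (hT r hr).2.1 hne)
      fun p hp => (hT p hp).2.2
  calc ∑ p ∈ T, p.natDegree = (∏ p ∈ T, p).natDegree :=
        (natDegree_prod_of_monic T id fun p hp => (hT p hp).1).symm
    _ ≤ g.natDegree := natDegree_le_of_dvd hprod hg

end Polynomial

theorem FiniteField.card_mul_le_of_forall_monic_irreducible {F : Type*} [Field F] [Fintype F]
    {n : ℕ} (hn : n ≠ 0) {T : Finset F[X]}
    (hT : ∀ p ∈ T, p.Monic ∧ Irreducible p ∧ p.natDegree = n) :
    #T * n ≤ Fintype.card F ^ n := by
  have hq : 1 < Fintype.card F := Fintype.one_lt_card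
  have hdvd : ∀ p ∈ T, p.Monic ∧ Irreducible p ∧ p ∣ X ^ Fintype.card F ^ n - X := by
    intro p hp
    obtain ⟨hmonic, hirr, hdeg⟩ := hT p hp
    have h := hirr.natDegree_dvd_iff_dvd_X_pow_card_pow_sub_X.mp (dvd_of_eq hdeg)
    rw [← Fintype.card_eq_nat_card] at h
    exact ⟨hmonic, hirr, h⟩
  calc #T * n = ∑ p ∈ T, p.natDegree := by
        rw [sum_congr rfl fun p hp => (hT p hp).2.2, sum_const, smul_eq_mul]
    _ ≤ (X ^ Fintype.card F ^ n - X : F[X]).natDegree :=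
        sum_natDegree_le_of_forall_monic_irreducible_dvd
          (X_pow_card_pow_sub_X_ne_zero F hn hq) hdvd
    _ = Fintype.card F ^ n := X_pow_card_pow_sub_X_natDegree_eq F hn hq

/-- There are at most `q^n / n` monic irreducible polynomials of degree `n`
over a finite field with `q` elements; equivalently, `n` times the number of
monic irreducible polynomials of degree `n` is at most `q^n`. -/
theorem count_monic_irreducible_le
    (F : Type*) [Field F] [Fintype F] (q n : ℕ) (hq : q = Fintype.card F)
    (hn : 0 < n) :
    ({p : Polynomial F | p.Monic ∧ Irreducible p ∧ p.natDegree = n}).Finite ∧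
      ({p : Polynomial F | p.Monic ∧ Irreducible p ∧ p.natDegree = n}).ncard * n ≤ q ^ n := by
  subst hq
  set S := {p : F[X] | p.Monic ∧ Irreducible p ∧ p.natDegree = n}
  have hbound (T : Finset F[X]) (hT : ↑T ⊆ S) : #T * n ≤ Fintype.card F ^ n :=
    FiniteField.card_mul_le_of_forall_monic_irreducible hn.ne' fun _ hp => hT hp
  have hfin : S.Finite := by
    by_contra hinf
    obtain ⟨T, hTS, hcard⟩ := Set.Infinite.exists_subset_card_eq hinf (Fintype.card F ^ n + 1)
    have := hbound T hTS
    rw [hcard] at this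
    nlinarith
  refine ⟨hfin, ?_⟩
  rw [Set.ncard_eq_toFinset_card S hfin]
  exact hbound _ (by simp)
end

section
/- If F ∈ F_q[t] is a squarefree polynomial of degree d ≥ 2, then the number of monic irreducible factors of F is at most 4·q·d/(log_q(d)+1), and in particular at most 4·q·d/log_q(d). -/
/-!
Let `m = ⌊log_q d⌋ + 1`. Distinct monic irreducible factors of `f` have degrees summing to at
most `d`, so at most `d / (m + 1)` of them have degree `> m`. A monic irreducible of degree
`e` divides `X ^ q ^ e - X`, as do the `q` linear polynomials, so there are at most `q` of
degree `1` and at most `(q ^ e - q) / e` of degree `e ≥ 2`; an induction on `m` bounds `m + 1`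
times the sum of these counts over `e ≤ m` by `(4q - 2) q ^ (m - 1) ≤ (4q - 2) d`. Hence the
number of factors is at most `4qd / (m + 1)`, and `log_q d < m`.
-/

open Real Polynomial Finset

theorem Polynomial.sum_natDegree_le_of_monic_irreducible_dvd {K : Type*} [Field K] {g : K[X]}
    (hg : g ≠ 0) {S : Finset K[X]} (hS : ∀ p ∈ S, p.Monic ∧ Irreducible p ∧ p ∣ g) :
    ∑ p ∈ S, p.natDegree ≤ g.natDegree := by
  have hcoprime : (S : Set K[X]).Pairwise IsCoprime := by
    intro p hp p' hp' hne
    obtain ⟨hpm, hpi, -⟩ := hS p hp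
    obtain ⟨hpm', hpi', -⟩ := hS p' hp'
    refine hpi.coprime_iff_not_dvd.mpr fun hdvd ↦ hne ?_
    exact eq_of_monic_of_associated hpm hpm' (hpi.associated_of_dvd hpi' hdvd)
  have hprod : ∏ p ∈ S, p ∣ g := Finset.prod_dvd_of_coprime hcoprime fun p hp ↦ (hS p hp).2.2
  calc ∑ p ∈ S, p.natDegree = (∏ p ∈ S, p).natDegree :=
        (natDegree_prod S id fun p hp ↦ (hS p hp).2.1.ne_zero).symm
    _ ≤ g.natDegree := natDegree_le_of_dvd hprod hg

theorem Polynomial.card_filter_lt_natDegree_mul_le {K : Type*} [Field K] {f : K[X]} (hf : f ≠ 0)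
    {S : Finset K[X]} (hS : ∀ p ∈ S, p.Monic ∧ Irreducible p ∧ p ∣ f) (m : ℕ) :
    #{p ∈ S | m < p.natDegree} * (m + 1) ≤ f.natDegree :=
  calc #{p ∈ S | m < p.natDegree} * (m + 1)
      = #{p ∈ S | m < p.natDegree} • (m + 1) := (smul_eq_mul _ _).symm
    _ ≤ ∑ p ∈ S with m < p.natDegree, p.natDegree :=
        card_nsmul_le_sum _ _ _ fun _ hp ↦ (mem_filter.mp hp).2
    _ ≤ f.natDegree :=
        sum_natDegree_le_of_monic_irreducible_dvd hf fun p hp ↦ hS p (mem_filter.mp hp).1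

-- `q` monic irreducibles of degree `1`, at most `(q ^ e - q) / e` of each degree `2 ≤ e ≤ k + 1`
noncomputable def monicIrreducibleCountBound (q k : ℕ) : ℝ :=
  q + ∑ e ∈ Icc 2 (k + 1), ((q : ℝ) ^ e - q) / e

theorem monicIrreducibleCountBound_zero (q : ℕ) : monicIrreducibleCountBound q 0 = q := by
  simp [monicIrreducibleCountBound]

theorem monicIrreducibleCountBound_succ (q k : ℕ) :
    monicIrreducibleCountBound q (k + 1) =
      monicIrreducibleCountBound q k + ((q : ℝ) ^ (k + 2) - q) / (k + 2) := by
  rw [monicIrreducibleCountBound, monicIrreducibleCountBound, sum_Icc_succ_top (by omega)]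
  push_cast
  ring

theorem monicIrreducibleCountBound_mul_le_step {q : ℕ} (hq : 2 ≤ q) (k : ℕ) :
    ((k : ℝ) + 3) * ((4 * q - 2) * q ^ k + (q ^ (k + 2) - q)) ≤
      ((k : ℝ) + 2) * ((4 * q - 2) * q ^ (k + 1)) := by
  have hk : (0 : ℝ) ≤ k := k.cast_nonneg
  have hqk : (0 : ℝ) ≤ (q : ℝ) ^ k := by positivity
  suffices 0 ≤ (q : ℝ) ^ k * ((3 * k + 5) * q ^ 2 - (6 * k + 16) * q + (2 * k + 6)) +
      (k + 3) * q by
    rw [← sub_nonneg]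
    convert this using 1
    ring
  rcases hq.eq_or_lt with rfl | hq3
  -- for `q = 2` the bracket is `2k - 6`
  · rcases le_or_gt 3 k with hk3 | hk3
    · have : (0 : ℝ) ≤ 2 * k - 6 := by
        have : (3 : ℝ) ≤ k := by exact_mod_cast hk3
        linarith
      push_cast
      nlinarith [mul_nonneg (pow_nonneg zero_le_two k : (0 : ℝ) ≤ 2 ^ k) this]
    · interval_cases k <;> norm_num
  · have hq3 : (3 : ℝ) ≤ q := by exact_mod_cast hq3
    have : 0 ≤ (3 * k + 5) * (q : ℝ) ^ 2 - (6 * k + 16) * q + (2 * k + 6) := by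
      nlinarith [mul_nonneg hk (by linarith : (0 : ℝ) ≤ q - 3)]
    positivity

theorem monicIrreducibleCountBound_mul_le {q : ℕ} (hq : 2 ≤ q) (k : ℕ) :
    ((k : ℝ) + 2) * monicIrreducibleCountBound q k ≤ (4 * q - 2) * q ^ k := by
  have hq' : (2 : ℝ) ≤ q := by exact_mod_cast hq
  induction k with
  | zero =>
    rw [monicIrreducibleCountBound_zero]
    push_cast
    linarith
  | succ k ih =>
    have hk : (0 : ℝ) < k + 2 := by positivity
    rw [monicIrreducibleCountBound_succ, ← mul_le_mul_iff_right₀ hk]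
    calc ((k : ℝ) + 2) * ((((k + 1 : ℕ) : ℝ) + 2) *
          (monicIrreducibleCountBound q k + ((q : ℝ) ^ (k + 2) - q) / (k + 2)))
        = ((k : ℝ) + 3) * (((k : ℝ) + 2) * monicIrreducibleCountBound q k +
            ((q : ℝ) ^ (k + 2) - q)) := by
          push_cast
          field_simp
          ring
      _ ≤ ((k : ℝ) + 3) * ((4 * q - 2) * q ^ k + ((q : ℝ) ^ (k + 2) - q)) := by gcongr
      _ ≤ ((k : ℝ) + 2) * ((4 * q - 2) * q ^ (k + 1)) :=
          monicIrreducibleCountBound_mul_le_step hq k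

namespace FiniteField

variable {K : Type*} [Field K] [Fintype K]

theorem sum_natDegree_le_card_pow {n : ℕ} (hn : n ≠ 0) {S : Finset K[X]}
    (hS : ∀ p ∈ S, p.Monic ∧ Irreducible p ∧ p.natDegree ∣ n) :
    ∑ p ∈ S, p.natDegree ≤ Fintype.card K ^ n := by
  have hq : 1 < Fintype.card K := Fintype.one_lt_card
  rw [← X_pow_card_pow_sub_X_natDegree_eq K hn hq]
  refine sum_natDegree_le_of_monic_irreducible_dvd (X_pow_card_pow_sub_X_ne_zero K hn hq)
    fun p hp ↦ ?_
  obtain ⟨hpm, hpi, hdeg⟩ := hS p hp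
  rw [← Nat.card_eq_fintype_card]
  exact ⟨hpm, hpi, hpi.natDegree_dvd_iff_dvd_X_pow_card_pow_sub_X.mp hdeg⟩

theorem card_filter_natDegree_eq_one_le {S : Finset K[X]}
    (hS : ∀ p ∈ S, p.Monic ∧ Irreducible p) :
    #{p ∈ S | p.natDegree = 1} ≤ Fintype.card K := by
  have h := sum_natDegree_le_card_pow one_ne_zero (S := {p ∈ S | p.natDegree = 1})
    fun p hp ↦ by
      obtain ⟨hpS, hdeg⟩ := mem_filter.mp hp
      exact ⟨(hS p hpS).1, (hS p hpS).2, hdeg.symm ▸ dvd_rfl⟩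
  rwa [sum_congr rfl fun p hp ↦ (mem_filter.mp hp).2, sum_const, smul_eq_mul, mul_one,
    pow_one] at h

theorem mul_card_filter_natDegree_eq_add_card_le {e : ℕ} (he : 2 ≤ e) {S : Finset K[X]}
    (hS : ∀ p ∈ S, p.Monic ∧ Irreducible p) :
    e * #{p ∈ S | p.natDegree = e} + Fintype.card K ≤ Fintype.card K ^ e := by
  classical
  set L : Finset K[X] := univ.image fun c : K ↦ X - C c
  have hL : ∀ p ∈ L, p.natDegree = 1 := by
    simp only [L, mem_image, mem_univ, true_and, forall_exists_index]
    rintro _ c rfl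
    exact natDegree_X_sub_C c
  have hdisj : Disjoint {p ∈ S | p.natDegree = e} L :=
    disjoint_left.mpr fun p hp hpL ↦ by
      have := (mem_filter.mp hp).2
      have := hL p hpL
      omega
  have h := sum_natDegree_le_card_pow (by omega : e ≠ 0) (S := {p ∈ S | p.natDegree = e} ∪ L)
    fun p hp ↦ by
      rcases mem_union.mp hp with hp | hp
      · obtain ⟨hpS, hdeg⟩ := mem_filter.mp hp
        exact ⟨(hS p hpS).1, (hS p hpS).2, hdeg ▸ dvd_rfl⟩
      · obtain ⟨c, -, rfl⟩ := mem_image.mp hp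
        exact ⟨monic_X_sub_C c, irreducible_X_sub_C c, (natDegree_X_sub_C c).symm ▸ one_dvd e⟩
  have hLcard : #L = Fintype.card K :=
    (card_image_of_injective _ fun c c' h ↦ C_injective (sub_right_inj.mp h)).trans card_univ
  rwa [sum_union hdisj, sum_congr rfl fun p hp ↦ (mem_filter.mp hp).2,
    sum_congr rfl hL, sum_const, sum_const, smul_eq_mul, smul_eq_mul, mul_one, hLcard,
    mul_comm] at h

theorem card_filter_natDegree_le_le {S : Finset K[X]} (hS : ∀ p ∈ S, p.Monic ∧ Irreducible p)
    (k : ℕ) :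
    (#{p ∈ S | p.natDegree ≤ k + 1} : ℝ) ≤ monicIrreducibleCountBound (Fintype.card K) k := by
  classical
  set q := Fintype.card K
  have hmaps : Set.MapsTo natDegree (({p ∈ S | p.natDegree ≤ k + 1} : Finset K[X]) : Set K[X])
      (Icc 1 (k + 1) : Finset ℕ) :=
    fun p hp ↦ by
      obtain ⟨hpS, hdeg⟩ := mem_filter.mp hp
      exact mem_Icc.mpr ⟨(hS p hpS).2.natDegree_pos, hdeg⟩
  have hdeg_eq : ∀ e ∈ Icc 2 (k + 1), (#{p ∈ S | p.natDegree = e} : ℝ) ≤ ((q : ℝ) ^ e - q) / e :=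
    fun e he ↦ by
      have he2 := (mem_Icc.mp he).1
      have h : (e * #{p ∈ S | p.natDegree = e} + q : ℝ) ≤ (q : ℝ) ^ e := by
        exact_mod_cast mul_card_filter_natDegree_eq_add_card_le he2 hS
      rw [le_div_iff₀ (by positivity)]
      linarith
  calc (#{p ∈ S | p.natDegree ≤ k + 1} : ℝ)
      = ∑ e ∈ Icc 1 (k + 1), (#{p ∈ {p ∈ S | p.natDegree ≤ k + 1} | p.natDegree = e} : ℝ) := by
        exact_mod_cast card_eq_sum_card_fiberwise hmaps
    _ ≤ ∑ e ∈ Icc 1 (k + 1), (#{p ∈ S | p.natDegree = e} : ℝ) := by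
        gcongr
        exact filter_subset _ S
    _ = #{p ∈ S | p.natDegree = 1} + ∑ e ∈ Icc 2 (k + 1), (#{p ∈ S | p.natDegree = e} : ℝ) := by
        rw [← insert_Icc_add_one_left_eq_Icc (by omega), sum_insert (by simp)]
        rfl
    _ ≤ q + ∑ e ∈ Icc 2 (k + 1), ((q : ℝ) ^ e - q) / e := by
        gcongr with e he
        · exact_mod_cast card_filter_natDegree_eq_one_le hS
        · exact hdeg_eq e he
    _ = monicIrreducibleCountBound q k := rfl

theorem card_mul_log_add_two_le {f : K[X]} (hf : 0 < f.natDegree) {S : Finset K[X]}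
    (hS : ∀ p ∈ S, p.Monic ∧ Irreducible p ∧ p ∣ f) :
    (#S : ℝ) * (Nat.log (Fintype.card K) f.natDegree + 2) ≤
      4 * Fintype.card K * f.natDegree := by
  set q := Fintype.card K
  set d := f.natDegree
  set k := Nat.log q d
  have hq : (2 : ℝ) ≤ q := by exact_mod_cast (Fintype.one_lt_card : 1 < q)
  have hqk : (q : ℝ) ^ k ≤ d := by exact_mod_cast Nat.pow_log_le_self q hf.ne'
  have hlow := card_filter_natDegree_le_le (fun p hp ↦ ⟨(hS p hp).1, (hS p hp).2.1⟩) k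
  have hhigh : (#{p ∈ S | k + 1 < p.natDegree} : ℝ) * (k + 2) ≤ d := by
    exact_mod_cast card_filter_lt_natDegree_mul_le (ne_zero_of_natDegree_gt hf) hS (k + 1)
  have hsplit : (#S : ℝ) = #{p ∈ S | p.natDegree ≤ k + 1} + #{p ∈ S | k + 1 < p.natDegree} := by
    simp only [← not_le]
    exact_mod_cast (card_filter_add_card_filter_not _).symm
  calc (#S : ℝ) * (k + 2)
      = (k + 2) * #{p ∈ S | p.natDegree ≤ k + 1} + #{p ∈ S | k + 1 < p.natDegree} * (k + 2) := by
        rw [hsplit]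
        ring
    _ ≤ (4 * q - 2) * q ^ k + d :=
        add_le_add ((mul_le_mul_of_nonneg_left hlow (by positivity)).trans
          (monicIrreducibleCountBound_mul_le (by exact_mod_cast hq) k)) hhigh
    _ ≤ (4 * q - 2) * d + d := by gcongr; linarith
    _ ≤ 4 * q * d := by linarith [(Nat.cast_nonneg d : (0 : ℝ) ≤ d)]

end FiniteField

theorem count_irreducible_factors_le_general
    (K : Type*) [Field K] [Fintype K] (q : ℕ) (hq : q = Fintype.card K)
    (f : Polynomial K) (d : ℕ) (hd : d = f.natDegree)
    (hd2 : 2 ≤ d) :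
    ({p : Polynomial K | p.Monic ∧ Irreducible p ∧ p ∣ f}).Finite ∧
      (({p : Polynomial K | p.Monic ∧ Irreducible p ∧ p ∣ f}).ncard : ℝ) ≤
        4 * q * d / (Real.logb q d + 1) ∧
      (({p : Polynomial K | p.Monic ∧ Irreducible p ∧ p ∣ f}).ncard : ℝ) ≤
        4 * q * d / Real.logb q d := by
  classical
  subst hq hd
  set S := (UniqueFactorizationMonoid.normalizedFactors f).toFinset
  have hf : f ≠ 0 := ne_zero_of_natDegree_gt hd2
  have hmem : ∀ p, p ∈ S ↔ p.Monic ∧ Irreducible p ∧ p ∣ f := fun p ↦ by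
    rw [Multiset.mem_toFinset, Polynomial.mem_normalizedFactors_iff hf]
    tauto
  have hSet : {p : K[X] | p.Monic ∧ Irreducible p ∧ p ∣ f} = S :=
    Set.ext fun p ↦ (hmem p).symm
  have hcount := FiniteField.card_mul_log_add_two_le (by omega) fun p hp ↦ (hmem p).mp hp
  have hlog : logb (Fintype.card K) f.natDegree < Nat.log (Fintype.card K) f.natDegree + 1 :=
    natFloor_logb_natCast _ _ ▸ Nat.lt_floor_add_one _
  have hlog_pos : 0 < logb (Fintype.card K) f.natDegree :=
    logb_pos (by exact_mod_cast Fintype.one_lt_card) (by exact_mod_cast hd2)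
  rw [hSet, Set.ncard_coe_finset]
  refine ⟨S.finite_toSet, ?_, ?_⟩ <;> rw [le_div_iff₀ (by positivity)] <;>
    exact le_trans (mul_le_mul_of_nonneg_left (by linarith) (Nat.cast_nonneg _)) hcount

/-- If `F` is a squarefree polynomial of degree `d ≥ 2` over a finite field with
`q` elements, then the number of its distinct monic irreducible factors is at most
`4·q·d/(log_q(d)+1)`, and in particular at most `4·q·d/log_q(d)`. -/
theorem count_irreducible_factors_le
    (K : Type*) [Field K] [Fintype K] (q : ℕ) (hq : q = Fintype.card K)
    (f : Polynomial K) (hf : Squarefree f) (d : ℕ) (hd : d = f.natDegree)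
    (hd2 : 2 ≤ d) :
    ({p : Polynomial K | p.Monic ∧ Irreducible p ∧ p ∣ f}).Finite ∧
      (({p : Polynomial K | p.Monic ∧ Irreducible p ∧ p ∣ f}).ncard : ℝ) ≤
        4 * q * d / (Real.logb q d + 1) ∧
      (({p : Polynomial K | p.Monic ∧ Irreducible p ∧ p ∣ f}).ncard : ℝ) ≤
        4 * q * d / Real.logb q d :=
  count_irreducible_factors_le_general K q hq f d hd hd2
end

section
/- Let K be a field of characteristic ≠ 2, f ∈ K[X] monic separable of odd degree d ≥ 3, A = K[X]/(f), x the image of X, and N : A → K the norm map. Suppose (x₀, y₀) ∈ K² satisfies y₀² = f(x₀), and x₁ ∈ K is such that x₁ - x = (x₀ - x)·φ² for some unit φ ∈ A^×. Then y₁ := y₀·N(φ) satisfies y₁² = f(x₁), i.e., (x₁, y₁) is again a point of the curve y² = f(x). -/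
/-! Taking norms in `x₁ - x = (x₀ - x) φ²` gives `f(x₁) = f(x₀) N(φ)² = (y₀ N(φ))²`, because
`N(c - x) = f(c)`: multiplication by `x` on `K[X]/(f)` has characteristic polynomial `f`. -/

open Polynomial

namespace AdjoinRoot

variable {R : Type*} [CommRing R] [StrongRankCondition R] {f : R[X]}

theorem charpoly_leftMulMatrix_root (hf : f.Monic) :
    (Algebra.leftMulMatrix (powerBasis' hf).basis (root f)).charpoly = f := by
  have := hf.free_adjoinRoot
  have := hf.finite_adjoinRoot
  rw [Algebra.leftMulMatrix_apply, LinearMap.charpoly_toMatrix]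
  refine eq_of_monic_of_dvd_of_natDegree_le hf (LinearMap.charpoly_monic _) ?_ ?_
  · rw [← mk_eq_zero, ← aeval_eq, Algebra.aeval_self_charpoly_lmul]
  · rw [LinearMap.charpoly_natDegree, (powerBasis' hf).finrank, powerBasis'_dim]

theorem norm_algebraMap_sub_root (hf : f.Monic) (c : R) :
    Algebra.norm R (algebraMap R (AdjoinRoot f) c - root f) = f.eval c := by
  conv_rhs => rw [← charpoly_leftMulMatrix_root hf]
  rw [Matrix.eval_charpoly, Algebra.norm_eq_matrix_det (powerBasis' hf).basis, map_sub,
    AlgHom.commutes, Matrix.algebraMap_eq_diagonal]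
  rfl

end AdjoinRoot

theorem point_from_same_descent_class_general
    (K : Type*) [Field K]
    (f : Polynomial K) (hf : f.Monic)
    (x₀ y₀ x₁ : K) (hP : y₀ ^ 2 = f.eval x₀)
    (φ : (AdjoinRoot f)ˣ)
    (hφ : algebraMap K (AdjoinRoot f) x₁ - AdjoinRoot.root f =
      (algebraMap K (AdjoinRoot f) x₀ - AdjoinRoot.root f) * (φ : AdjoinRoot f) ^ 2) :
    (y₀ * Algebra.norm K (φ : AdjoinRoot f)) ^ 2 = f.eval x₁ := by
  have hnorm := congrArg (Algebra.norm K) hφ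
  rw [map_mul, map_pow, AdjoinRoot.norm_algebraMap_sub_root hf,
    AdjoinRoot.norm_algebraMap_sub_root hf] at hnorm
  rw [hnorm, ← hP]
  ring

/-- Let `K` be a field of characteristic `≠ 2`, `f ∈ K[X]` monic separable of
odd degree `d ≥ 3`, `A = K[X]/(f)`, `x` the image of `X`, and `N : A → K` the
norm map. If `y₀² = f(x₀)` and `x₁ - x = (x₀ - x)·φ²` for a unit `φ ∈ Aˣ`,
then `y₁ := y₀ · N(φ)` satisfies `y₁² = f(x₁)`. -/
theorem point_from_same_descent_class
    (K : Type*) [Field K] (hchar : ringChar K ≠ 2)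
    (f : Polynomial K) (hf : f.Monic) (hsep : f.Separable)
    (hodd : Odd f.natDegree) (hd : 3 ≤ f.natDegree)
    (x₀ y₀ x₁ : K) (hP : y₀ ^ 2 = f.eval x₀)
    (φ : (AdjoinRoot f)ˣ)
    (hφ : algebraMap K (AdjoinRoot f) x₁ - AdjoinRoot.root f =
      (algebraMap K (AdjoinRoot f) x₀ - AdjoinRoot.root f) * (φ : AdjoinRoot f) ^ 2) :
    (y₀ * Algebra.norm K (φ : AdjoinRoot f)) ^ 2 = f.eval x₁ :=
  point_from_same_descent_class_general K f hf x₀ y₀ x₁ hP φ hφ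
end
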